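/- arXiv:1909.12051 — 8 statements merged into one kernel-verified Lean document; each statement's English description precedes it below -/
import Mathlib

section
/- Let σᵢ* = r·σⱼ* with r > 1, σⱼ* > 0, and let σᵢ, σⱼ both solve σ' = σ(σ* - σ) with respective targets σᵢ*, σⱼ* and common initialization σ₀. For s ∈ (0, 1/4), f ∈ (3/4, 1), if σ₀ ≤ s·σⱼ*·(s/(rf))^{1/((1-f)(r-1))}, then there exists a time t with σⱼ(t) ≤ s·σⱼ* and σᵢ(t) ≥ f·σᵢ*. -/
/-!
The logistic equation `σ' = σ (σ* - σ)` is solved by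
`1 / σ(t) = e^{-σ* t} (1/σ₀ - 1/σ*) + 1/σ*`, so `σ(t) ≤ θ σ*` exactly when `e^{-σ* t}` exceeds
`(1 - θ) σ₀ / (θ (σ* - σ₀))`. Take `t` to be the time at which `σᵢ` reaches `f σᵢ*`. Since
`σᵢ* = r σⱼ*`, at that time `e^{-σⱼ* t} = (e^{-σᵢ* t})^{1/r}`, and `σⱼ(t) ≤ s σⱼ*` reduces to an
inequality between powers of `v = σ₀ / (s σⱼ*)`. The bound on `σ₀` gives `v^{r-1} ≤ x^{1/(1-f)}`
with `x = s / (r f) ≤ e⁻¹`, and `x^{f/(1-f)} ≤ e^{-f/(1-f)} ≤ 1 - f` closes the gap.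
-/

open Real Set

theorem eq_mul_exp_integral_of_hasDerivAt {y g : ℝ → ℝ} (hg : Continuous g)
    (hy : ∀ t, HasDerivAt y (y t * g t) t) (t : ℝ) :
    y t = y 0 * exp (∫ u in (0 : ℝ)..t, g u) := by
  have hG : ∀ t, HasDerivAt (fun t => ∫ u in (0 : ℝ)..t, g u) (g t) t := fun t =>
    (hg.integral_hasStrictDerivAt 0 t).hasDerivAt
  have hconst : ∀ t, HasDerivAt (fun t => y t * exp (-∫ u in (0 : ℝ)..t, g u)) 0 t := fun t =>
    ((hy t).mul (hG t).neg.exp).congr_deriv (by ring)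
  have h := is_const_of_deriv_eq_zero (fun t => (hconst t).differentiableAt)
    (fun t => (hconst t).deriv) t 0
  simp only [intervalIntegral.integral_same, neg_zero, exp_zero, mul_one] at h
  rw [← h, mul_assoc, ← exp_add, neg_add_cancel, exp_zero, mul_one]

section Logistic

variable {σ : ℝ → ℝ} {a σ₀ : ℝ}

theorem logistic_eq_inv (ha : a ≠ 0) (hσ₀ : σ₀ ≠ 0)
    (hode : ∀ t, HasDerivAt σ (σ t * (a - σ t)) t) (hinit : σ 0 = σ₀) (t : ℝ) :
    σ t = (exp (-(a * t)) * (σ₀⁻¹ - a⁻¹) + a⁻¹)⁻¹ := by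
  set ψ : ℝ → ℝ := fun t => exp (-(a * t)) * (σ₀⁻¹ - a⁻¹) + a⁻¹
  have hψ : ∀ t, HasDerivAt ψ (1 - a * ψ t) t := fun t => by
    have hlin : HasDerivAt (fun t => -(a * t)) (-a) t :=
      ((hasDerivAt_id' t).const_mul a).neg.congr_deriv (by ring)
    refine (hlin.exp.mul_const (σ₀⁻¹ - a⁻¹)).add_const a⁻¹ |>.congr_deriv ?_
    simp only [ψ]
    field_simp
    ring
  -- the defect `σ ψ - 1` solves the linear equation `y' = -σ y` and vanishes at `0`
  have hdefect : ∀ t, HasDerivAt (fun t => σ t * ψ t - 1) ((σ t * ψ t - 1) * -σ t) t :=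
    fun t => (((hode t).mul (hψ t)).sub_const 1).congr_deriv (by ring)
  have hσ : Continuous σ := (Differentiable.continuous fun t => (hode t).differentiableAt)
  have h := eq_mul_exp_integral_of_hasDerivAt hσ.neg hdefect t
  simp only [ψ, hinit, mul_zero, neg_zero, exp_zero, one_mul, sub_add_cancel,
    mul_inv_cancel₀ hσ₀, sub_self, zero_mul] at h
  exact eq_inv_of_mul_eq_one_left (sub_eq_zero.1 h)

theorem logistic_inv_sub_inv (hσ₀ : 0 < σ₀) (hσ₀a : σ₀ < a) {θ : ℝ} (hθ : 0 < θ)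
    (hode : ∀ t, HasDerivAt σ (σ t * (a - σ t)) t) (hinit : σ 0 = σ₀) (t : ℝ) :
    0 < σ t ∧ (σ t)⁻¹ - (θ * a)⁻¹ =
      (exp (-(a * t)) - (1 - θ) * σ₀ / (θ * (a - σ₀))) * ((a - σ₀) / (σ₀ * a)) := by
  have ha : 0 < a := hσ₀.trans hσ₀a
  have hinv : a⁻¹ < σ₀⁻¹ := inv_strictAnti₀ hσ₀ hσ₀a
  rw [logistic_eq_inv ha.ne' hσ₀.ne' hode hinit, inv_inv]
  refine ⟨inv_pos.2 (add_pos (mul_pos (exp_pos _) (sub_pos.2 hinv)) (inv_pos.2 ha)), ?_⟩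
  field_simp [(sub_pos.2 hσ₀a).ne']
  ring

theorem logistic_le_iff (hσ₀ : 0 < σ₀) (hσ₀a : σ₀ < a) {θ : ℝ} (hθ : 0 < θ)
    (hode : ∀ t, HasDerivAt σ (σ t * (a - σ t)) t) (hinit : σ 0 = σ₀) (t : ℝ) :
    σ t ≤ θ * a ↔ (1 - θ) * σ₀ / (θ * (a - σ₀)) ≤ exp (-(a * t)) := by
  obtain ⟨hpos, hdiff⟩ := logistic_inv_sub_inv hσ₀ hσ₀a hθ hode hinit t
  have ha : 0 < a := hσ₀.trans hσ₀a
  have hk : 0 < (a - σ₀) / (σ₀ * a) := by positivity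
  rw [← inv_le_inv₀ (by positivity) hpos, ← sub_nonneg, hdiff,
    mul_nonneg_iff_of_pos_right hk, sub_nonneg]

theorem le_logistic_iff (hσ₀ : 0 < σ₀) (hσ₀a : σ₀ < a) {θ : ℝ} (hθ : 0 < θ)
    (hode : ∀ t, HasDerivAt σ (σ t * (a - σ t)) t) (hinit : σ 0 = σ₀) (t : ℝ) :
    θ * a ≤ σ t ↔ exp (-(a * t)) ≤ (1 - θ) * σ₀ / (θ * (a - σ₀)) := by
  obtain ⟨hpos, hdiff⟩ := logistic_inv_sub_inv hσ₀ hσ₀a hθ hode hinit t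
  have ha : 0 < a := hσ₀.trans hσ₀a
  have hk : 0 < (a - σ₀) / (σ₀ * a) := by positivity
  rw [← inv_le_inv₀ hpos (by positivity), ← sub_nonneg, ← neg_sub,
    hdiff, ← neg_mul, neg_sub, mul_nonneg_iff_of_pos_right hk, sub_nonneg]

end Logistic

theorem rpow_le_inv_one_add_of_le_exp_neg_one {x y : ℝ} (hx : 0 ≤ x) (hxe : x ≤ exp (-1))
    (hy : 0 ≤ y) : x ^ y ≤ (1 + y)⁻¹ :=
  calc x ^ y ≤ exp (-1) ^ y := rpow_le_rpow hx hxe hy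
    _ = (exp y)⁻¹ := by rw [← exp_mul, neg_one_mul, exp_neg]
    _ ≤ (1 + y)⁻¹ := inv_anti₀ (by linarith) (by linarith [add_one_le_exp y])

-- the two sides are the thresholds of `logistic_le_iff` at `θ = s` and of `le_logistic_iff`
-- at `θ = f`, for the targets `a` and `r * a`
theorem rpow_threshold_le_threshold {r a σ₀ s f : ℝ} (hr : 1 < r) (ha : 0 < a) (hσ₀ : 0 < σ₀)
    (hs : s ∈ Ioo 0 1) (hf : f ∈ Ioo 0 1) (hx : s / (r * f) ≤ exp (-1))
    (hσ₀s : σ₀ ≤ s * a)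
    (hcond : σ₀ ≤ s * a * (s / (r * f)) ^ (1 / ((1 - f) * (r - 1)))) :
    ((1 - s) * σ₀ / (s * (a - σ₀))) ^ r ≤ (1 - f) * σ₀ / (f * (r * a - σ₀)) := by
  obtain ⟨hs0, hs1⟩ := hs
  obtain ⟨hf0, hf1⟩ := hf
  set x := s / (r * f)
  set v := σ₀ / (s * a)
  have hx0 : 0 < x := by positivity
  have hv0 : 0 < v := by positivity
  have hv : v ≤ x ^ (1 / ((1 - f) * (r - 1))) := by
    rw [div_le_iff₀ (by positivity)]
    linarith
  have hσ₀a : σ₀ < a := by nlinarith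
  have hvpow : v ^ (r - 1) ≤ (1 - f) * x :=
    calc v ^ (r - 1) ≤ (x ^ (1 / ((1 - f) * (r - 1)))) ^ (r - 1) :=
          rpow_le_rpow hv0.le hv (by linarith)
      _ = x ^ (f / (1 - f)) * x := by
          rw [← rpow_mul hx0.le, ← rpow_add_one hx0.ne']
          congr 1
          field_simp [(sub_pos.2 hr).ne', (sub_pos.2 hf1).ne']
          ring
      _ ≤ (1 + f / (1 - f))⁻¹ * x := by
          gcongr
          exact rpow_le_inv_one_add_of_le_exp_neg_one hx0.le hx (by positivity)
      _ = (1 - f) * x := by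
          field_simp [(sub_pos.2 hf1).ne']
          ring
  calc ((1 - s) * σ₀ / (s * (a - σ₀))) ^ r ≤ v ^ r := by
        refine rpow_le_rpow (by positivity) ?_ (by linarith)
        rw [div_le_div_iff₀ (mul_pos hs0 (sub_pos.2 hσ₀a)) (by positivity)]
        nlinarith [mul_pos hs0 hσ₀]
    _ = v ^ (r - 1) * v := by rw [← rpow_add_one hv0.ne', sub_add_cancel]
    _ ≤ (1 - f) * x * v := by gcongr
    _ = (1 - f) * σ₀ / (f * (r * a)) := by
        simp only [x, v]
        field_simp
    _ ≤ (1 - f) * σ₀ / (f * (r * a - σ₀)) := by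
        have : σ₀ < r * a := by nlinarith
        gcongr
        nlinarith

theorem stmt_5_general (r σjs σis σ0 s f : ℝ)
    (hr : 1 < r) (hσjs : 0 < σjs) (his : σis = r * σjs)
    (hσ0 : 0 < σ0)
    (hs : s ∈ Set.Ioo (0 : ℝ) (1/4)) (hf : f ∈ Set.Ioo (3/4 : ℝ) 1)
    (σi σj : ℝ → ℝ)
    (hodei : ∀ t : ℝ, HasDerivAt σi (σi t * (σis - σi t)) t)
    (hodej : ∀ t : ℝ, HasDerivAt σj (σj t * (σjs - σj t)) t)
    (hiniti : σi 0 = σ0) (hinitj : σj 0 = σ0)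
    (hcond : σ0 ≤ s * σjs * (s / (r * f)) ^ (1 / ((1 - f) * (r - 1)))) :
    ∃ t : ℝ, 0 ≤ t ∧ σj t ≤ s * σjs ∧ f * σis ≤ σi t := by
  obtain ⟨hs0, hs1⟩ := hs
  obtain ⟨hf0, hf1⟩ := hf
  subst his
  have hx : s / (r * f) ≤ exp (-1) := by
    rw [div_le_iff₀ (by positivity)]
    nlinarith [exp_neg_one_gt_d9, mul_lt_mul_of_pos_right hr (by linarith : (0 : ℝ) < f)]
  have hσ0s : σ0 ≤ s * σjs := hcond.trans (mul_le_of_le_one_right (by positivity)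
    (rpow_le_one (by positivity) (hx.trans (exp_le_one_iff.2 (by norm_num))) (by positivity)))
  have hσ0j : σ0 < σjs := by nlinarith
  have hσ0f : σ0 < f * (r * σjs) := by nlinarith [mul_lt_mul_of_pos_right hr hσjs]
  set E := (1 - f) * σ0 / (f * (r * σjs - σ0))
  have hE0 : 0 < E := div_pos (by nlinarith) (by nlinarith)
  have hE1 : E ≤ 1 := (div_le_one (by nlinarith)).2 (by nlinarith)
  have hexp : exp (-(r * σjs * (-log E / (r * σjs)))) = E := by
    rw [mul_div_cancel₀ _ (by positivity), neg_neg, exp_log hE0]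
  refine ⟨-log E / (r * σjs), div_nonneg (neg_nonneg.2 (log_nonpos hE0.le hE1)) (by positivity),
    ?_, ?_⟩
  · rw [logistic_le_iff hσ0 hσ0j hs0 hodej hinitj]
    have : exp (-(σjs * (-log E / (r * σjs)))) = E ^ r⁻¹ := by
      rw [rpow_def_of_pos hE0]
      congr 1
      field_simp
    rw [this, le_rpow_inv_iff_of_pos (div_nonneg (by nlinarith) (by nlinarith)) hE0.le
      (by linarith)]
    exact rpow_threshold_le_threshold hr hσjs hσ0 ⟨hs0, by linarith⟩ ⟨by linarith, hf1⟩ hx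
      hσ0s hcond
  · rw [le_logistic_iff hσ0 (by nlinarith) (by linarith) hodei hiniti, hexp]

theorem stmt_5 (r σjs σis σ0 s f : ℝ)
    (hr : 1 < r) (hσjs : 0 < σjs) (his : σis = r * σjs)
    (hσ0 : 0 < σ0) (hσ0j : σ0 < σjs)
    (hs : s ∈ Set.Ioo (0 : ℝ) (1/4)) (hf : f ∈ Set.Ioo (3/4 : ℝ) 1)
    (σi σj : ℝ → ℝ)
    (hodei : ∀ t : ℝ, HasDerivAt σi (σi t * (σis - σi t)) t)
    (hodej : ∀ t : ℝ, HasDerivAt σj (σj t * (σjs - σj t)) t)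
    (hiniti : σi 0 = σ0) (hinitj : σj 0 = σ0)
    (hcond : σ0 ≤ s * σjs * (s / (r * f)) ^ (1 / ((1 - f) * (r - 1)))) :
    ∃ t : ℝ, 0 ≤ t ∧ σj t ≤ s * σjs ∧ f * σis ≤ σi t :=
  stmt_5_general r σjs σis σ0 s f hr hσjs his hσ0 hs hf σi σj hodei hodej hiniti hinitj hcond
end

section
/- Let σᵢ* = r·σⱼ* with r > 1 and suppose two solutions of the logistic ODE σ' = σ(σ* - σ) with common initialization σ₀ ∈ (0, σⱼ*) are (s,f)-incremental for s ∈ (0,1/4), f ∈ (3/4,1). Then σ₀ ≤ s·σⱼ*·(s/(rf))^{(1-s)/(r-1)}. -/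
/-!
With `E = exp (σⱼ* t)`, the logistic closed form turns the two incrementality conditions into
`E ≤ Z := s (σⱼ* - σ₀) / ((1 - s) σ₀)` and `f (r σⱼ* - σ₀) ≤ (1 - f) σ₀ E ^ r`, since
`exp (σᵢ* t) = E ^ r`. Chaining them gives `r f / s ≤ Z ^ (r - 1)`, while weighted AM-GM gives
`Z ^ (1 - s) ≤ (1 - s) Z + s = s σⱼ* / σ₀`; eliminating `Z` yields the bound on `σ₀`.
-/

open Real

theorem eq_zero_of_hasDerivAt_mul_self {g W : ℝ → ℝ} (hg : Continuous g)
    (hW : ∀ t, HasDerivAt W (g t * W t) t) (h0 : W 0 = 0) (t : ℝ) : W t = 0 := by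
  set A : ℝ → ℝ := fun u => ∫ v in (0 : ℝ)..u, g v
  have hA : ∀ u, HasDerivAt A (g u) u := fun u => (hg.integral_hasStrictDerivAt 0 u).hasDerivAt
  have hderiv : ∀ u, HasDerivAt (fun v => W v * exp (-A v)) 0 u := fun u =>
    ((hW u).mul (hA u).neg.exp).congr_deriv (by ring)
  have hconst := is_const_of_deriv_eq_zero (fun u => (hderiv u).differentiableAt)
    (fun u => (hderiv u).deriv) t 0
  simpa [A, h0, exp_ne_zero] using hconst

theorem logistic_mul_eq {c σ₀ : ℝ} {σ : ℝ → ℝ} (hode : ∀ t, HasDerivAt σ (σ t * (c - σ t)) t)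
    (hinit : σ 0 = σ₀) (t : ℝ) :
    σ t * (c - σ₀ + σ₀ * exp (c * t)) = c * σ₀ * exp (c * t) := by
  have hexp : ∀ u, HasDerivAt (fun v => exp (c * v)) (exp (c * u) * c) u := fun u => by
    simpa using ((hasDerivAt_id u).const_mul c).exp
  have hW : ∀ u, HasDerivAt (fun v => σ v * (c - σ₀ + σ₀ * exp (c * v)) - c * σ₀ * exp (c * v))
      ((c - σ u) * (σ u * (c - σ₀ + σ₀ * exp (c * u)) - c * σ₀ * exp (c * u))) u := fun u =>
    (((hode u).mul ((hasDerivAt_const u (c - σ₀)).add ((hexp u).const_mul σ₀))).sub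
      ((hexp u).const_mul (c * σ₀))).congr_deriv (by simp only [Pi.add_apply]; ring)
  have hvanish := eq_zero_of_hasDerivAt_mul_self (continuous_const.sub
    (continuous_iff_continuousAt.2 fun u => (hode u).continuousAt)) hW (by simp [hinit]; ring) t
  linarith

section Logistic

variable {c σ₀ : ℝ} {σ : ℝ → ℝ} (hc : 0 < c) (hσ₀ : 0 ≤ σ₀) (hσ₀c : σ₀ ≤ c)
  (hode : ∀ t, HasDerivAt σ (σ t * (c - σ t)) t) (hinit : σ 0 = σ₀)
include hc hσ₀ hσ₀c hode hinit

theorem one_sub_mul_exp_le_of_logistic_le {s t : ℝ} (h : σ t ≤ s * c) :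
    (1 - s) * σ₀ * exp (c * t) ≤ s * (c - σ₀) := by
  have hD : 0 ≤ c - σ₀ + σ₀ * exp (c * t) := by have := exp_pos (c * t); positivity
  have h' := mul_le_mul_of_nonneg_right h hD
  rw [logistic_mul_eq hode hinit] at h'
  nlinarith

theorem mul_le_one_sub_mul_exp_of_le_logistic {f t : ℝ} (h : f * c ≤ σ t) :
    f * (c - σ₀) ≤ (1 - f) * σ₀ * exp (c * t) := by
  have hD : 0 ≤ c - σ₀ + σ₀ * exp (c * t) := by have := exp_pos (c * t); positivity
  have h' := mul_le_mul_of_nonneg_right h hD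
  rw [logistic_mul_eq hode hinit] at h'
  nlinarith

end Logistic

theorem rpow_one_sub_le {Z s : ℝ} (hZ : 0 ≤ Z) (hs0 : 0 ≤ s) (hs1 : s ≤ 1) :
    Z ^ (1 - s) ≤ (1 - s) * Z + s := by
  have := rpow_one_add_le_one_add_mul_self (s := Z - 1) (p := 1 - s) (by linarith)
    (by linarith) (by linarith)
  rw [add_sub_cancel] at this
  linarith

section Bounds

variable {r c σ₀ s f Z : ℝ} (hr : 1 < r) (hσ₀ : 0 < σ₀) (hσ₀c : σ₀ < c) (hs : 0 < s)
  (hs1 : s < 1) (hZeq : (1 - s) * σ₀ * Z = s * (c - σ₀))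
include hr hσ₀ hσ₀c hs hs1 hZeq

omit hr in
theorem pos_of_one_sub_mul_mul_eq : 0 < Z :=
  pos_of_mul_pos_right (hZeq ▸ mul_pos hs (sub_pos.2 hσ₀c)) (mul_pos (sub_pos.2 hs1) hσ₀).le

theorem div_le_rpow_sub_one_of_bounds {x : ℝ} (hsf : s ≤ f) (hf : f < 1)
    (hx : 0 < x) (hj : (1 - s) * σ₀ * x ≤ s * (c - σ₀))
    (hi : f * (r * c - σ₀) ≤ (1 - f) * σ₀ * x ^ r) :
    r * f / s ≤ Z ^ (r - 1) := by
  have h1s : 0 < 1 - s := by linarith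
  have hZ : 0 < Z := pos_of_one_sub_mul_mul_eq hσ₀ hσ₀c hs hs1 hZeq
  have hxZ : x ≤ Z := le_of_mul_le_mul_left (hj.trans hZeq.ge) (by positivity)
  have hcore : r * (1 - f) * (c - σ₀) ≤ (1 - s) * (r * c - σ₀) := by
    nlinarith [mul_nonneg (mul_nonneg (by linarith : 0 ≤ r) (sub_nonneg.2 hsf))
        (sub_nonneg.2 hσ₀c.le),
      mul_nonneg (mul_nonneg hσ₀.le (sub_nonneg.2 hr.le)) h1s.le]
  have hlhs : r * f * Z * ((1 - f) * σ₀) ≤ s * (f * (r * c - σ₀)) := by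
    have : r * f * Z * ((1 - f) * σ₀) * (1 - s) = s * (f * (r * (1 - f) * (c - σ₀))) := by
      linear_combination r * f * (1 - f) * hZeq
    nlinarith [mul_le_mul_of_nonneg_left hcore (mul_nonneg hs.le (hs.le.trans hsf))]
  have hxr : x ^ r ≤ Z ^ r := rpow_le_rpow hx.le hxZ (by linarith)
  have hchain : r * f * Z * ((1 - f) * σ₀) ≤ Z ^ r * s * ((1 - f) * σ₀) := by
    have : 0 ≤ s * ((1 - f) * σ₀) := mul_nonneg hs.le (mul_nonneg (sub_nonneg.2 hf.le) hσ₀.le)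
    nlinarith [mul_le_mul_of_nonneg_left hxr this]
  rw [rpow_sub_one hZ.ne', div_le_div_iff₀ hs hZ]
  exact le_of_mul_le_mul_right hchain (mul_pos (by linarith) hσ₀)

theorem le_mul_rpow_of_div_le_rpow_sub_one (hf : 0 < f) (hratio : r * f / s ≤ Z ^ (r - 1)) :
    σ₀ ≤ s * c * (s / (r * f)) ^ ((1 - s) / (r - 1)) := by
  have h1s : 0 < 1 - s := by linarith
  have hZ : 0 ≤ Z := (pos_of_one_sub_mul_mul_eq hσ₀ hσ₀c hs hs1 hZeq).le
  have hpow : (r * f / s) ^ ((1 - s) / (r - 1)) ≤ s * c / σ₀ := by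
    calc (r * f / s) ^ ((1 - s) / (r - 1)) ≤ (Z ^ (r - 1)) ^ ((1 - s) / (r - 1)) :=
          rpow_le_rpow (by positivity) hratio (div_nonneg h1s.le (by linarith))
      _ = Z ^ (1 - s) := by rw [← rpow_mul hZ, mul_div_cancel₀ _ (by linarith)]
      _ ≤ (1 - s) * Z + s := rpow_one_sub_le hZ hs.le hs1.le
      _ = s * c / σ₀ := by rw [eq_div_iff hσ₀.ne']; linear_combination hZeq
  rw [← inv_div, inv_rpow (by positivity), ← div_eq_mul_inv, le_div_iff₀ (by positivity)]
  rwa [le_div_iff₀ hσ₀, mul_comm] at hpow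

end Bounds

theorem stmt_8 (r σjs σis σ0 s f : ℝ)
    (hr : 1 < r) (hσjs : 0 < σjs) (his : σis = r * σjs)
    (hσ0 : 0 < σ0) (hσ0j : σ0 < σjs)
    (hs : s ∈ Set.Ioo (0 : ℝ) (1/4)) (hf : f ∈ Set.Ioo (3/4 : ℝ) 1)
    (σi σj : ℝ → ℝ)
    (hodei : ∀ t : ℝ, HasDerivAt σi (σi t * (σis - σi t)) t)
    (hodej : ∀ t : ℝ, HasDerivAt σj (σj t * (σjs - σj t)) t)
    (hiniti : σi 0 = σ0) (hinitj : σj 0 = σ0)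
    (hinc : ∃ t : ℝ, 0 ≤ t ∧ σj t ≤ s * σjs ∧ f * σis ≤ σi t) :
    σ0 ≤ s * σjs * (s / (r * f)) ^ ((1 - s) / (r - 1)) := by
  obtain ⟨hs0, hs4⟩ := hs
  obtain ⟨hf34, hf1⟩ := hf
  have hs1 : s < 1 := by linarith
  obtain ⟨t, -, hjt, hit⟩ := hinc
  have hσ0i : σ0 < σis := by rw [his]; nlinarith
  have hj := one_sub_mul_exp_le_of_logistic_le hσjs hσ0.le hσ0j.le hodej hinitj hjt
  have hi := mul_le_one_sub_mul_exp_of_le_logistic (by linarith) hσ0.le hσ0i.le hodei hiniti hit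
  rw [show σis * t = σjs * t * r by rw [his]; ring, exp_mul, his] at hi
  set Z := s * (σjs - σ0) / ((1 - s) * σ0)
  have hZeq : (1 - s) * σ0 * Z = s * (σjs - σ0) :=
    mul_div_cancel₀ _ (mul_pos (sub_pos.2 hs1) hσ0).ne'
  exact le_mul_rpow_of_div_le_rpow_sub_one hr hσ0 hσ0j hs0 hs1 hZeq (by linarith)
    (div_le_rpow_sub_one_of_bounds hr hσ0 hσ0j hs0 hs1 hZeq (by linarith) hf1 (exp_pos _) hj hi)
end

section
/- For the recurrence r(t+1) = r(t)·(1 + (c/N)·r(t)^{1-2/N}·(1 - r(t)))^N with 0 < c ≤ 1, integer N ≥ 2, and 0 < r(0) < 1, the iterates satisfy r(t) ≤ 1 for all t. -/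
/-! Write `x = η r^a (1 - r)` for the increment of one step. Since `1 + x ≤ exp x`, one step
multiplies `r` by at most `exp (N x)`, and `N x ≤ 1 - r` as soon as `N η ≤ 1` and `0 ≤ r ≤ 1`.
Hence the next iterate is at most `r exp (1 - r)`, which never exceeds `1` because
`y exp (-y)` is maximised at `y = 1`. -/

open Real Set

lemma Real.one_add_pow_le_exp_mul {x : ℝ} (hx : 0 ≤ 1 + x) (N : ℕ) :
    (1 + x) ^ N ≤ exp (N * x) := by
  rw [exp_nat_mul]
  exact pow_le_pow_left₀ hx (by linarith [add_one_le_exp x]) N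

lemma Real.mul_exp_one_sub_le_one (x : ℝ) : x * exp (1 - x) ≤ 1 := by
  calc x * exp (1 - x) = exp 1 * (x * exp (-x)) := by rw [sub_eq_add_neg, exp_add]; ring
    _ ≤ exp 1 * exp (-1) := by gcongr; exact mul_exp_neg_le_exp_neg_one x
    _ = 1 := by rw [← exp_add]; simp

lemma mul_one_add_pow_mem_Ioc {η a r : ℝ} {N : ℕ} (hη : 0 ≤ η) (hNη : N * η ≤ 1) (ha : 0 ≤ a)
    (hr : r ∈ Ioc 0 1) : r * (1 + η * r ^ a * (1 - r)) ^ N ∈ Ioc 0 1 := by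
  obtain ⟨hr0, hr1⟩ := hr
  set x := η * r ^ a * (1 - r)
  have hra : r ^ a ≤ 1 := rpow_le_one hr0.le hr1 ha
  have hx : 0 ≤ x := mul_nonneg (mul_nonneg hη (rpow_nonneg hr0.le a)) (sub_nonneg.2 hr1)
  have hNx : N * x ≤ 1 - r :=
    calc N * x = (N * η) * (r ^ a * (1 - r)) := by ring
      _ ≤ 1 * (1 * (1 - r)) := by gcongr
      _ = 1 - r := by ring
  refine ⟨by positivity, ?_⟩
  calc r * (1 + x) ^ N ≤ r * exp (N * x) := by gcongr; exact one_add_pow_le_exp_mul (by linarith) N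
    _ ≤ r * exp (1 - r) := by gcongr
    _ ≤ 1 := mul_exp_one_sub_le_one r

theorem stmt_9 (N : ℕ) (hN : 2 ≤ N) (c : ℝ) (hc0 : 0 < c) (hc1 : c ≤ 1)
    (r : ℕ → ℝ) (h0 : 0 < r 0) (h1 : r 0 < 1)
    (hrec : ∀ t : ℕ, r (t + 1) =
      r t * (1 + (c / N) * r t ^ (1 - 2 / (N : ℝ)) * (1 - r t)) ^ N) :
    ∀ t : ℕ, r t ≤ 1 := by
  have hNpos : (0 : ℝ) < N := by positivity
  have hη : 0 ≤ c / N := by positivity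
  have hNη : N * (c / N) ≤ 1 := by rwa [mul_div_cancel₀ c hNpos.ne']
  have ha : 0 ≤ 1 - 2 / (N : ℝ) := by
    rw [sub_nonneg, div_le_one hNpos]
    exact_mod_cast hN
  have hmem : ∀ t, r t ∈ Ioc 0 1 := by
    intro t
    induction t with
    | zero => exact ⟨h0, h1.le⟩
    | succ t ih => rw [hrec t]; exact mul_one_add_pow_mem_Ioc hη hNη ha ih
  exact fun t => (hmem t).2
end

section
/- Consider the recurrence σ(t+1) = σ(t)·(1 + (c/2)·R·(1 - σ(t)/σ*))² with 0 < c < 2(√2 - 1), 0 < R ≤ 1, 0 < σ(0) = σ₀ < σ*. Then for all t ≥ 0, 1/σ(t) - 1/σ* ≥ (1/σ₀ - 1/σ*)·(1 - cR - (c²/4)R²)^t. -/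
/-!
Put `a = cR/2`, so that the recurrence reads `x' = x (1 + a u)²` with `u = 1 - x/σ*`, and the
contraction factor is `q = 1 - 2a - a² = 2 - (1 + a)²`, which is nonnegative because
`a < √2 - 1`. Writing `x = σ*(1 - u)`, the one-step bound `1/x' - 1/σ* ≥ q (1/x - 1/σ*)` is
equivalent to `(1 + a u)² (1 - (2a + a²) u) ≤ 1`, a polynomial inequality in `a, u ≥ 0`.
It also keeps the iterates in `(0, σ*]`, so the bound can be iterated.
-/

lemma one_add_mul_sq_mul_one_sub_le_one {a u : ℝ} (ha : 0 ≤ a) (hu : 0 ≤ u) :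
    (1 + a * u) ^ 2 * (1 - (2 * a + a ^ 2) * u) ≤ 1 := by
  have h : 1 - (1 + a * u) ^ 2 * (1 - (2 * a + a ^ 2) * u) =
      a ^ 2 * u + (3 * a ^ 2 + 2 * a ^ 3) * u ^ 2 + (2 * a ^ 3 + a ^ 4) * u ^ 3 := by ring
  have : 0 ≤ 1 - (1 + a * u) ^ 2 * (1 - (2 * a + a ^ 2) * u) := by rw [h]; positivity
  linarith

lemma mul_sub_inv_le_inv_step {a s x : ℝ} (ha : 0 ≤ a) (hx : 0 < x) (hxs : x ≤ s) :
    (1 - 2 * a - a ^ 2) * (1 / x - 1 / s) ≤ 1 / (x * (1 + a * (1 - x / s)) ^ 2) - 1 / s := by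
  have hs : 0 < s := hx.trans_le hxs
  set u := 1 - x / s with hu
  have hu0 : 0 ≤ u := sub_nonneg.mpr ((div_le_one hs).mpr hxs)
  have hx_eq : x = s * (1 - u) := by rw [hu]; field_simp; ring
  have hv : 0 < 1 + a * u := by positivity
  have hdiff : 1 / (x * (1 + a * u) ^ 2) - 1 / s - (1 - 2 * a - a ^ 2) * (1 / x - 1 / s) =
      (1 - (1 + a * u) ^ 2 * (1 - (2 * a + a ^ 2) * u)) / (x * (1 + a * u) ^ 2) := by
    rw [hx_eq]
    have : 1 - u ≠ 0 := by rw [hu, sub_sub_cancel]; positivity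
    field_simp
    ring
  rw [← sub_nonneg, hdiff]
  exact div_nonneg (sub_nonneg.mpr (one_add_mul_sq_mul_one_sub_le_one ha hu0)) (by positivity)

lemma step_mem_Ioc {a s x : ℝ} (ha : 0 ≤ a) (hq : 0 ≤ 1 - 2 * a - a ^ 2) (hx : 0 < x)
    (hxs : x ≤ s) : x * (1 + a * (1 - x / s)) ^ 2 ∈ Set.Ioc 0 s := by
  have hs : 0 < s := hx.trans_le hxs
  have hu0 : 0 ≤ 1 - x / s := sub_nonneg.mpr ((div_le_one hs).mpr hxs)
  have hpos : 0 < x * (1 + a * (1 - x / s)) ^ 2 := by positivity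
  refine ⟨hpos, ?_⟩
  have hgap : 0 ≤ 1 / (x * (1 + a * (1 - x / s)) ^ 2) - 1 / s :=
    (mul_nonneg hq (sub_nonneg.mpr (one_div_le_one_div_of_le hx hxs))).trans
      (mul_sub_inv_le_inv_step ha hx hxs)
  rwa [sub_nonneg, one_div_le_one_div hs hpos] at hgap

theorem mul_pow_le_inv_sub_inv_of_recurrence {a s : ℝ} {x : ℕ → ℝ} (ha : 0 ≤ a)
    (hq : 0 ≤ 1 - 2 * a - a ^ 2) (hx0 : 0 < x 0) (hx0s : x 0 ≤ s)
    (hrec : ∀ n, x (n + 1) = x n * (1 + a * (1 - x n / s)) ^ 2) (n : ℕ) :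
    (1 / x 0 - 1 / s) * (1 - 2 * a - a ^ 2) ^ n ≤ 1 / x n - 1 / s := by
  have hmem : ∀ n, x n ∈ Set.Ioc 0 s := by
    intro n
    induction n with
    | zero => exact ⟨hx0, hx0s⟩
    | succ n ih => rw [hrec]; exact step_mem_Ioc ha hq ih.1 ih.2
  induction n with
  | zero => simp
  | succ n ih =>
    calc (1 / x 0 - 1 / s) * (1 - 2 * a - a ^ 2) ^ (n + 1)
        = (1 - 2 * a - a ^ 2) * ((1 / x 0 - 1 / s) * (1 - 2 * a - a ^ 2) ^ n) := by ring
      _ ≤ (1 - 2 * a - a ^ 2) * (1 / x n - 1 / s) := mul_le_mul_of_nonneg_left ih hq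
      _ ≤ 1 / x (n + 1) - 1 / s := by
        rw [hrec]; exact mul_sub_inv_le_inv_step ha (hmem n).1 (hmem n).2

lemma one_sub_two_mul_sub_sq_nonneg {a : ℝ} (ha : 0 ≤ a) (ha' : a ≤ Real.sqrt 2 - 1) :
    0 ≤ 1 - 2 * a - a ^ 2 := by
  have h : (1 + a) ^ 2 ≤ Real.sqrt 2 ^ 2 := pow_le_pow_left₀ (by positivity) (by linarith) 2
  rw [Real.sq_sqrt zero_le_two] at h
  linarith

theorem stmt_11 (c R σs σ0 : ℝ)
    (hc0 : 0 < c) (hc1 : c < 2 * (Real.sqrt 2 - 1))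
    (hR0 : 0 < R) (hR1 : R ≤ 1) (hσ0 : 0 < σ0) (hσ0s : σ0 < σs)
    (σ : ℕ → ℝ) (hinit : σ 0 = σ0)
    (hrec : ∀ t : ℕ, σ (t + 1) = σ t * (1 + (c / 2) * R * (1 - σ t / σs)) ^ 2) :
    ∀ t : ℕ, (1 / σ0 - 1 / σs) * (1 - c * R - (c ^ 2 / 4) * R ^ 2) ^ t ≤
      1 / σ t - 1 / σs := by
  intro t
  have ha : 0 ≤ c / 2 * R := by positivity
  have ha' : c / 2 * R ≤ Real.sqrt 2 - 1 :=
    (mul_le_of_le_one_right (by positivity) hR1).trans (by linarith)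
  have hq : 1 - c * R - (c ^ 2 / 4) * R ^ 2 = 1 - 2 * (c / 2 * R) - (c / 2 * R) ^ 2 := by ring
  rw [hq, ← hinit]
  exact mul_pow_le_inv_sub_inv_of_recurrence ha (one_sub_two_mul_sub_sq_nonneg ha ha')
    (hinit ▸ hσ0) (hinit ▸ hσ0s.le) hrec t
end

section
/- Consider the recurrence σ(t+1) = σ(t)·(1 + (c/2)·R·(1 - σ(t)/σ*))² with 0 < c < 2(√2 - 1), 0 < R ≤ 1, 0 < σ(0) = σ₀ < σ*. Then for all t ≥ 0, 1/σ(t) - 1/σ* ≤ (1/σ₀ - 1/σ*)·(1 - cR + c²R²)^t. -/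
/-!
Write `k = cR/2` and `u = 1 - σ/σ*`, so that one step multiplies `σ` by `(1 + k u)²`. For `k ≤ 1/2`
this never overshoots `σ*`, so `u` stays in `[0, 1]`. Bounding `1/(1 + k u)` by `1 - k u + (k u)²`
and squaring gives `σ/σ' ≤ (1 - u) + u (1 - 2k + 4k²)`, i.e. the gap `1/σ - 1/σ*` contracts by
the factor `1 - 2k + 4k² = 1 - cR + c²R²` at every step.
-/

lemma one_sub_mul_one_add_mul_sq_le_one {k u : ℝ} (hk0 : 0 ≤ k) (hk : k ≤ 1 / 2) (hu : 0 ≤ u) :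
    (1 - u) * (1 + k * u) ^ 2 ≤ 1 := by
  nlinarith [mul_nonneg hu (by linarith : (0:ℝ) ≤ 1 - 2 * k),
    mul_nonneg (mul_nonneg hu hu) (by nlinarith : (0:ℝ) ≤ 2 * k - k ^ 2),
    mul_nonneg (mul_nonneg (mul_nonneg hu hu) hu) (sq_nonneg k)]

lemma one_add_sq_inv_le {x : ℝ} (hx : 0 ≤ x) : ((1 + x) ^ 2)⁻¹ ≤ (1 - x + x ^ 2) ^ 2 := by
  have hprod : (1 + x) * (1 - x + x ^ 2) = 1 + x ^ 3 := by ring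
  rw [inv_le_iff_one_le_mul₀' (by positivity), ← mul_pow, hprod]
  nlinarith [pow_nonneg hx 3]

lemma sq_one_sub_add_sq_le {x k : ℝ} (hx0 : 0 ≤ x) (hxk : x ≤ k) (hx2 : x ≤ 2) :
    (1 - x + x ^ 2) ^ 2 ≤ 1 - 2 * x + 4 * k * x := by
  have h : 3 * x - 2 * x ^ 2 + x ^ 3 ≤ 4 * k := by
    nlinarith [mul_nonneg (sq_nonneg x) (by linarith : (0:ℝ) ≤ 2 - x)]
  nlinarith [mul_le_mul_of_nonneg_left h hx0]

section Step

variable {k σs σ : ℝ}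

lemma step_pos (hk0 : 0 ≤ k) (hσ0 : 0 < σ) (hσ : σ ≤ σs) :
    0 < σ * (1 + k * (1 - σ / σs)) ^ 2 := by
  have hσs : 0 < σs := hσ0.trans_le hσ
  have hu : 0 ≤ 1 - σ / σs := sub_nonneg.mpr (div_le_one_of_le₀ hσ hσs.le)
  have : 0 < 1 + k * (1 - σ / σs) := by nlinarith [mul_nonneg hk0 hu]
  positivity

lemma step_le (hk0 : 0 ≤ k) (hk : k ≤ 1 / 2) (hσs : 0 < σs) (hσ : σ ≤ σs) :
    σ * (1 + k * (1 - σ / σs)) ^ 2 ≤ σs := by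
  have h := one_sub_mul_one_add_mul_sq_le_one hk0 hk (u := 1 - σ / σs)
    (sub_nonneg.mpr (div_le_one_of_le₀ hσ hσs.le))
  rw [sub_sub_cancel, div_mul_eq_mul_div, div_le_one hσs] at h
  exact h

lemma inv_step_sub_inv_le (hk0 : 0 ≤ k) (hk : k ≤ 1 / 2) (hσ0 : 0 < σ) (hσ : σ ≤ σs) :
    1 / (σ * (1 + k * (1 - σ / σs)) ^ 2) - 1 / σs ≤
      (1 - 2 * k + 4 * k ^ 2) * (1 / σ - 1 / σs) := by
  have hσs : 0 < σs := hσ0.trans_le hσ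
  set u := 1 - σ / σs with hu
  have hu0 : 0 ≤ u := sub_nonneg.mpr (div_le_one_of_le₀ hσ hσs.le)
  have hu1 : u ≤ 1 := by rw [hu]; linarith [div_pos hσ0 hσs]
  have hx : 0 ≤ k * u := mul_nonneg hk0 hu0
  have hxk : k * u ≤ k := mul_le_of_le_one_right hk0 hu1
  calc 1 / (σ * (1 + k * u) ^ 2) - 1 / σs
      = ((1 + k * u) ^ 2)⁻¹ / σ - 1 / σs := by field_simp
    _ ≤ (1 - k * u + (k * u) ^ 2) ^ 2 / σ - 1 / σs := by
        gcongr; exact one_add_sq_inv_le hx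
    _ ≤ (1 - 2 * (k * u) + 4 * k * (k * u)) / σ - 1 / σs := by
        gcongr; exact sq_one_sub_add_sq_le hx hxk (by linarith)
    _ = (1 - 2 * k + 4 * k ^ 2) * (1 / σ - 1 / σs) := by
        rw [hu]; field_simp; ring

end Step

theorem stmt_12 (c R σs σ0 : ℝ)
    (hc0 : 0 < c) (hc1 : c < 2 * (Real.sqrt 2 - 1))
    (hR0 : 0 < R) (hR1 : R ≤ 1) (hσ0 : 0 < σ0) (hσ0s : σ0 < σs)
    (σ : ℕ → ℝ) (hinit : σ 0 = σ0)
    (hrec : ∀ t : ℕ, σ (t + 1) = σ t * (1 + (c / 2) * R * (1 - σ t / σs)) ^ 2) :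
    ∀ t : ℕ, 1 / σ t - 1 / σs ≤
      (1 / σ0 - 1 / σs) * (1 - c * R + c ^ 2 * R ^ 2) ^ t := by
  have hσs : 0 < σs := hσ0.trans hσ0s
  have hsqrt : Real.sqrt 2 < 3 / 2 := by
    rw [Real.sqrt_lt' (by norm_num)]; norm_num
  have hk0 : 0 ≤ c / 2 * R := by positivity
  have hk : c / 2 * R ≤ 1 / 2 := by nlinarith
  set q := 1 - c * R + c ^ 2 * R ^ 2
  have hq : q = 1 - 2 * (c / 2 * R) + 4 * (c / 2 * R) ^ 2 := by ring
  have hq0 : 0 ≤ q := by nlinarith [sq_nonneg (c * R - 1 / 2)]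
  have invariant : ∀ t, (0 < σ t ∧ σ t ≤ σs) ∧ 1 / σ t - 1 / σs ≤ (1 / σ0 - 1 / σs) * q ^ t := by
    intro t
    induction t with
    | zero => simp [hinit, hσ0, hσ0s.le]
    | succ t ih =>
      obtain ⟨⟨hpos, hle⟩, hgap⟩ := ih
      rw [hrec t]
      refine ⟨⟨step_pos hk0 hpos hle, step_le hk0 hk hσs hle⟩, ?_⟩
      calc _ ≤ q * (1 / σ t - 1 / σs) := by
            rw [hq]; exact inv_step_sub_inv_le hk0 hk hpos hle
        _ ≤ q * ((1 / σ0 - 1 / σs) * q ^ t) := mul_le_mul_of_nonneg_left hgap hq0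
        _ = (1 / σ0 - 1 / σs) * q ^ (t + 1) := by ring
  exact fun t => (invariant t).2
end

section
/- Let W₁(t), ..., W_N(t) be d×d matrices evolving under gradient flow of ℓ(W) = (1/2N)‖W_N⋯W₁ - W*‖_F², with W* symmetric PSD with eigendecomposition W* = UᵀD*U, and initialization Wₙ(0) = σ₀^{1/N}·I for all n with σ₀ > 0. Then each matrix Dₙ(t) = U Wₙ(t) Uᵀ remains diagonal for all t, and the singular values σᵢ(t) of W(t) = W_N(t)⋯W₁(t) satisfy σᵢ'(t) = σᵢ(t)^{2-2/N}(σᵢ*(t) - σᵢ(t)), where σᵢ* are the eigenvalues of W*. -/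
/-!
In the eigenbasis of `W*`, i.e. for the layers `Vₙ = U Wₙ Uᵀ`, the flow is the same gradient
flow with target `D*`. The tuples whose layers all equal one diagonal matrix form
the range of a projection (average the diagonals), and the vector field maps that range into
itself; a Grönwall estimate on the distance to the range shows that a trajectory starting
there, as `σ₀^{1/N} • 1` does, never leaves it. On it every layer is `diagonal δ(t)` with
`δᵢ' = N⁻¹ δᵢ^{N-1} (D*ᵢᵢ - δᵢ^N)` and the end-to-end product is `diagonal δ(t)^N`, whose
derivative `δᵢ^{2N-2} (D*ᵢᵢ - δᵢ^N)` equals `(δᵢ^N)^{2-2/N} (D*ᵢᵢ - δᵢ^N)` because `δᵢ` stays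
positive: for `N ≥ 2`, `0` is an equilibrium.
-/

open Matrix

section ODEInvariance

open Set

variable {E : Type*} [NormedAddCommGroup E] [NormedSpace ℝ E]

theorem eq_zero_of_norm_deriv_le_mul_norm {y y' : ℝ → E} {t₀ : ℝ}
    (hy : ∀ t, HasDerivAt y (y' t) t)
    (hbound : ∀ a b, ∃ K, ∀ t ∈ Icc a b, ‖y' t‖ ≤ K * ‖y t‖) (h₀ : y t₀ = 0) (t : ℝ) :
    y t = 0 := by
  rcases le_total t₀ t with h | h
  · obtain ⟨K, hK⟩ := hbound t₀ t
    exact eq_zero_of_abs_deriv_le_mul_abs_self_of_eq_zero_right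
      (HasDerivAt.continuousOn fun s _ => hy s) (fun s _ => (hy s).hasDerivWithinAt) h₀
      (fun s hs => hK s (Ico_subset_Icc_self hs)) t ⟨h, le_rfl⟩
  · obtain ⟨K, hK⟩ := hbound t t₀
    have hz : ∀ s, HasDerivAt (fun s => y (-s)) (-y' (-s)) s := fun s => by
      simpa [Function.comp_def] using (hy (-s)).scomp s (hasDerivAt_neg s)
    have := eq_zero_of_abs_deriv_le_mul_abs_self_of_eq_zero_right (K := K) (a := -t₀)
      (HasDerivAt.continuousOn fun s _ => hz s) (fun s _ => (hz s).hasDerivWithinAt)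
      (by simpa using h₀) (fun s hs => by
        simpa using hK (-s) ⟨by linarith [hs.2], by linarith [hs.1]⟩) (-t)
      ⟨by linarith, le_rfl⟩
    simpa using this

theorem ODE_solution_isFixedPt_of_isIdempotentElem {p : E →L[ℝ] E} (hp : IsIdempotentElem p)
    {G : E → E} (hG : LocallyLipschitz G) (hinv : ∀ x, p x = x → p (G x) = G x)
    {V : ℝ → E} (hV : ∀ t, HasDerivAt V (G (V t)) t) {t₀ : ℝ} (h₀ : p (V t₀) = V t₀)
    (t : ℝ) : p (V t) = V t := by
  have hVc : Continuous V := continuous_iff_continuousAt.2 fun t => (hV t).continuousAt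
  have hy : ∀ t, HasDerivAt (fun s => V s - p (V s)) (G (V t) - p (G (V t))) t := fun t =>
    (hV t).sub (p.hasFDerivAt.comp_hasDerivAt t (hV t))
  refine (sub_eq_zero.1 (eq_zero_of_norm_deriv_le_mul_norm hy ?_ (sub_eq_zero.2 h₀.symm) t)).symm
  intro a b
  obtain ⟨K, hK⟩ := LocallyLipschitzOn.exists_lipschitzOnWith_of_compact
    ((isCompact_Icc.image hVc).union (isCompact_Icc.image (p.continuous.comp hVc)))
    (hG.locallyLipschitzOn (s := V '' Icc a b ∪ (p ∘ V) '' Icc a b))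
  refine ⟨‖1 - p‖ * K, fun s hs => ?_⟩
  have hfix : (1 - p) (G (p (V s))) = 0 := by
    simp [hinv _ (by simpa using congr($hp (V s)))]
  calc ‖G (V s) - p (G (V s))‖ = ‖(1 - p) (G (V s) - G (p (V s)))‖ := by
        rw [map_sub, hfix, sub_zero]; rfl
    _ ≤ ‖1 - p‖ * ‖G (V s) - G (p (V s))‖ := (1 - p).le_opNorm _
    _ ≤ ‖1 - p‖ * (K * ‖V s - p (V s)‖) := by
        gcongr
        simpa [dist_eq_norm] using hK.dist_le_mul _ (Or.inl ⟨s, hs, rfl⟩) _ (Or.inr ⟨s, hs, rfl⟩)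
    _ = ‖1 - p‖ * K * ‖V s - p (V s)‖ := by ring

end ODEInvariance

-- The entrywise sup norm, so that derivatives and smoothness of matrices are entrywise.
attribute [local instance] Matrix.normedAddCommGroup Matrix.normedSpace

section MatrixCalculus

variable {E : Type*} [NormedAddCommGroup E] [NormedSpace ℝ E] {k : WithTop ℕ∞}
  {l m n : Type*} [Fintype l] [Fintype m] [Fintype n]

theorem ContDiff.matrix_mul {A : E → Matrix l m ℝ} {B : E → Matrix m n ℝ}
    (hA : ContDiff ℝ k A) (hB : ContDiff ℝ k B) : ContDiff ℝ k fun x => A x * B x := by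
  refine contDiff_pi.2 fun i => contDiff_pi.2 fun j => ?_
  simp only [Matrix.mul_apply]
  exact ContDiff.sum fun r _ =>
    (contDiff_pi.1 (contDiff_pi.1 hA i) r).mul (contDiff_pi.1 (contDiff_pi.1 hB r) j)

theorem ContDiff.matrix_transpose {A : E → Matrix m n ℝ} (hA : ContDiff ℝ k A) :
    ContDiff ℝ k fun x => (A x)ᵀ :=
  contDiff_pi.2 fun i => contDiff_pi.2 fun j => contDiff_pi.1 (contDiff_pi.1 hA j) i

theorem contDiff_list_prod_map {ι : Type*} [Fintype ι] [DecidableEq m] (L : List ι) :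
    ContDiff ℝ k fun x : ι → Matrix m m ℝ => (L.map x).prod := by
  induction L with
  | nil => exact contDiff_const
  | cons i L ih => exact (contDiff_apply ℝ (Matrix m m ℝ) i).matrix_mul ih

end MatrixCalculus

noncomputable section DeepLinear

variable {m : Type*} [Fintype m] [DecidableEq m] {N : ℕ}

def endToEnd (x : Fin N → Matrix m m ℝ) : Matrix m m ℝ := (List.ofFn x).reverse.prod

def gradFlowField (A : Matrix m m ℝ) (x : Fin N → Matrix m m ℝ) (n : Fin N) : Matrix m m ℝ :=
  (N : ℝ)⁻¹ • (((List.ofFn x).take n).reverse.prodᵀ * (A - endToEnd x) *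
    ((List.ofFn x).drop (n + 1)).reverse.prodᵀ)

theorem map_endToEnd {F : Type*} [FunLike F (Matrix m m ℝ) (Matrix m m ℝ)]
    [MonoidHomClass F (Matrix m m ℝ) (Matrix m m ℝ)] (φ : F) (x : Fin N → Matrix m m ℝ) :
    φ (endToEnd x) = endToEnd fun k => φ (x k) := by
  rw [endToEnd, endToEnd, map_list_prod, List.map_reverse, List.map_ofFn]
  rfl

theorem map_gradFlowField {F : Type*} [FunLike F (Matrix m m ℝ) (Matrix m m ℝ)]
    [AlgHomClass F ℝ (Matrix m m ℝ) (Matrix m m ℝ)] [StarHomClass F (Matrix m m ℝ) (Matrix m m ℝ)]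
    (φ : F) (A : Matrix m m ℝ) (x : Fin N → Matrix m m ℝ) (n : Fin N) :
    φ (gradFlowField A x n) = gradFlowField (φ A) (fun k => φ (x k)) n := by
  have hT : ∀ B : Matrix m m ℝ, Bᵀ = star B := fun B => by
    rw [star_eq_conjTranspose, conjTranspose_eq_transpose_of_trivial]
  simp only [gradFlowField, hT, map_smul, map_mul, map_sub, map_star, map_list_prod,
    map_endToEnd, List.map_reverse, List.map_take, List.map_drop, List.map_ofFn]
  rfl

theorem endToEnd_const (A : Matrix m m ℝ) : endToEnd (fun _ : Fin N => A) = A ^ N := by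
  simp [endToEnd, List.ofFn_const]

theorem gradFlowField_const_diagonal (a δ : m → ℝ) :
    gradFlowField (diagonal a) (fun _ : Fin N => diagonal δ) =
      fun _ => diagonal fun i => (N : ℝ)⁻¹ * (δ i ^ (N - 1) * (a i - δ i ^ N)) := by
  funext n
  simp only [gradFlowField, endToEnd_const, List.ofFn_const, List.take_replicate,
    List.drop_replicate, List.reverse_replicate, List.prod_replicate, diagonal_pow,
    diagonal_transpose, diagonal_sub, diagonal_mul_diagonal, ← diagonal_smul,
    min_eq_left n.isLt.le]
  congr 1
  funext i
  have hexp : (n : ℕ) + (N - (n + 1)) = N - 1 := by omega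
  simp only [Pi.smul_apply, Pi.pow_apply, smul_eq_mul, ← hexp, pow_add]
  ring

theorem contDiff_gradFlowField {k : WithTop ℕ∞} (A : Matrix m m ℝ) :
    ContDiff ℝ k (gradFlowField (N := N) A) := by
  refine contDiff_pi.2 fun n => ?_
  simp only [gradFlowField, endToEnd, List.ofFn_eq_map, ← List.map_take, ← List.map_drop,
    ← List.map_reverse]
  have hprod (L : List (Fin N)) := contDiff_list_prod_map (m := m) (k := k) L
  exact ContDiff.const_smul _
    (((hprod _).matrix_transpose.matrix_mul (contDiff_const.sub (hprod _))).matrix_mul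
      (hprod _).matrix_transpose)

variable (m N) in
def diagAverage : (Fin N → Matrix m m ℝ) →L[ℝ] (Fin N → Matrix m m ℝ) :=
  LinearMap.toContinuousLinearMap
    { toFun x _ := diagonal ((N : ℝ)⁻¹ • ∑ k, (x k).diag)
      map_add' x y := by
        funext _
        simp only [Pi.add_apply, diag_add, Finset.sum_add_distrib, smul_add]
        rw [diagonal_add]
        rfl
      map_smul' c x := by
        funext _
        simp only [Pi.smul_apply, diag_smul, ← Finset.smul_sum, smul_comm c (N : ℝ)⁻¹,
          diagonal_smul, RingHom.id_apply] }

theorem diagAverage_apply (x : Fin N → Matrix m m ℝ) :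
    diagAverage m N x = fun _ => diagonal ((N : ℝ)⁻¹ • ∑ k, (x k).diag) :=
  rfl

theorem diagAverage_const_diagonal (hN : N ≠ 0) (δ : m → ℝ) :
    diagAverage m N (fun _ => diagonal δ) = fun _ => diagonal δ := by
  simp only [diagAverage_apply, diag_diagonal, Finset.sum_const, Finset.card_univ,
    Fintype.card_fin, ← Nat.cast_smul_eq_nsmul ℝ, smul_smul,
    inv_mul_cancel₀ (Nat.cast_ne_zero (R := ℝ) |>.2 hN), one_smul]

theorem isIdempotentElem_diagAverage (hN : N ≠ 0) : IsIdempotentElem (diagAverage m N) :=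
  ContinuousLinearMap.ext fun x => by
    change diagAverage m N (diagAverage m N x) = _
    rw [diagAverage_apply x, diagAverage_const_diagonal hN]

theorem diagAverage_gradFlowField (hN : N ≠ 0) {A : Matrix m m ℝ} (hA : A.IsDiag)
    {x : Fin N → Matrix m m ℝ} (hx : diagAverage m N x = x) :
    diagAverage m N (gradFlowField A x) = gradFlowField A x := by
  rw [← hx, diagAverage_apply x, ← hA.diagonal_diag, gradFlowField_const_diagonal,
    diagAverage_const_diagonal hN]

theorem hasDerivAt_map_gradFlowField (φ : Matrix m m ℝ ≃⋆ₐ[ℝ] Matrix m m ℝ) {A : Matrix m m ℝ}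
    {W : ℝ → Fin N → Matrix m m ℝ} {t : ℝ} (hW : HasDerivAt W (gradFlowField A (W t)) t) :
    HasDerivAt (fun s n => φ (W s n)) (gradFlowField (φ A) fun n => φ (W t n)) t := by
  refine hasDerivAt_pi.2 fun n => ?_
  rw [← map_gradFlowField]
  exact φ.toAlgEquiv.toLinearMap.toContinuousLinearMap.hasFDerivAt.comp_hasDerivAt t
    (hasDerivAt_pi.1 hW n)

theorem exists_diagonal_of_hasDerivAt_gradFlowField (hN : N ≠ 0) {a δ₀ : m → ℝ}
    {V : ℝ → Fin N → Matrix m m ℝ} (hV : ∀ t, HasDerivAt V (gradFlowField (diagonal a) (V t)) t)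
    {t₀ : ℝ} (h₀ : V t₀ = fun _ => diagonal δ₀) :
    ∃ δ : ℝ → m → ℝ, (∀ t, V t = fun _ => diagonal (δ t)) ∧ δ t₀ = δ₀ ∧
      ∀ t i, HasDerivAt (fun s => δ s i) ((N : ℝ)⁻¹ * (δ t i ^ (N - 1) * (a i - δ t i ^ N))) t := by
  have hfix (t : ℝ) : diagAverage m N (V t) = V t :=
    ODE_solution_isFixedPt_of_isIdempotentElem (isIdempotentElem_diagAverage hN)
      (contDiff_gradFlowField (k := 1) _).locallyLipschitz
      (fun _ hx => diagAverage_gradFlowField hN (isDiag_diagonal a) hx) hV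
      (by rw [h₀]; exact diagAverage_const_diagonal hN _) t
  set δ : ℝ → m → ℝ := fun t => (N : ℝ)⁻¹ • ∑ k, (V t k).diag
  have hVδ (t : ℝ) : V t = fun _ => diagonal (δ t) := (hfix t).symm
  let n₀ : Fin N := ⟨0, Nat.pos_of_ne_zero hN⟩
  refine ⟨δ, hVδ, diagonal_injective (congr_fun ((hVδ t₀).symm.trans h₀) n₀), fun t i => ?_⟩
  have hentry : (fun s => δ s i) = fun s => V s n₀ i i := funext fun s => by
    rw [hVδ s]
    exact (diagonal_apply_eq _ _).symm
  have := hasDerivAt_pi.1 (hasDerivAt_pi.1 (hasDerivAt_pi.1 (hV t) n₀) i) i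
  rw [hVδ t, gradFlowField_const_diagonal] at this
  simpa [hentry] using this

end DeepLinear

section ScalarDynamics

open Set

theorem pos_of_hasDerivAt_eq_mul {y g : ℝ → ℝ} (hg : Continuous g)
    (hy : ∀ t, HasDerivAt y (g t * y t) t) {t₀ : ℝ} (h₀ : 0 < y t₀) (t : ℝ) : 0 < y t := by
  have hne : ∀ s, y s ≠ 0 := by
    intro s hs
    refine h₀.ne' (eq_zero_of_norm_deriv_le_mul_norm hy (fun a b => ?_) hs t₀)
    obtain ⟨C, hC⟩ := (isCompact_Icc (a := a) (b := b)).exists_bound_of_continuousOn hg.continuousOn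
    exact ⟨C, fun s hs => by
      rw [norm_mul]; exact mul_le_mul_of_nonneg_right (hC s hs) (norm_nonneg _)⟩
  by_contra! ht
  obtain ⟨s, -, hs⟩ := intermediate_value_uIcc
    (HasDerivAt.continuousOn fun s _ => hy s) (mem_uIcc.2 (Or.inl ⟨ht, h₀.le⟩))
  exact hne s hs

theorem hasDerivAt_pow_of_scalar_gradFlow {N : ℕ} (hN : 1 ≤ N) {c : ℝ} {y : ℝ → ℝ}
    (hy : ∀ t, HasDerivAt y ((N : ℝ)⁻¹ * (y t ^ (N - 1) * (c - y t ^ N))) t) {t₀ : ℝ}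
    (h₀ : 0 < y t₀) (t : ℝ) :
    HasDerivAt (fun s => y s ^ N) ((y t ^ N) ^ (2 - 2 / (N : ℝ)) * (c - y t ^ N)) t := by
  refine ((hy t).pow N).congr_deriv ?_
  obtain rfl | hN2 := hN.eq_or_lt
  · simp
  have hyc : Continuous y := continuous_iff_continuousAt.2 fun s => (hy s).continuousAt
  -- for `N ≥ 2` zero is an equilibrium, so `y` stays positive
  have hpos : 0 < y t := by
    refine pos_of_hasDerivAt_eq_mul (g := fun s => (N : ℝ)⁻¹ * (y s ^ (N - 2) * (c - y s ^ N)))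
      (by fun_prop) (fun s => ?_) h₀ t
    convert hy s using 1
    rw [show N - 1 = N - 2 + 1 by omega, pow_succ]
    ring
  have hexp : (N : ℝ) * (2 - 2 / N) = ((2 * (N - 1) : ℕ) : ℝ) := by
    rw [Nat.cast_mul, Nat.cast_sub hN]
    field_simp
    ring
  rw [← Real.rpow_natCast_mul hpos.le, hexp, Real.rpow_natCast, pow_mul']
  field_simp

end ScalarDynamics

theorem stmt_14_general (d N : ℕ) (hN : 1 ≤ N) (σ0 : ℝ) (hσ0 : 0 < σ0)
    (W : Fin N → ℝ → Matrix (Fin d) (Fin d) ℝ)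
    (Wstar U Dstar : Matrix (Fin d) (Fin d) ℝ)
    (hU : U * Uᵀ = 1) (hdiag : Dstar.IsDiag)
    (hdecomp : Wstar = Uᵀ * Dstar * U)
    -- the end-to-end product W(t) = W_N(t) ⋯ W_1(t)
    (P : ℝ → Matrix (Fin d) (Fin d) ℝ)
    (hP : ∀ t, P t = (List.ofFn fun n : Fin N => W n t).reverse.prod)
    -- gradient flow: Ẇₙ = (1/N) · W_{1:n-1}ᵀ (W* - W) W_{n+1:N}ᵀ, entrywise
    (hflow : ∀ (n : Fin N) (t : ℝ) (i j : Fin d),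
      HasDerivAt (fun s => W n s i j)
        (((N : ℝ)⁻¹ •
          (((List.ofFn fun k : Fin N => W k t).take (n : ℕ)).reverse.prodᵀ *
            (Wstar - P t) *
            ((List.ofFn fun k : Fin N => W k t).drop ((n : ℕ) + 1)).reverse.prodᵀ)) i j) t)
    -- initialization: Wₙ(0) = σ₀^{1/N} · I
    (hinit : ∀ n : Fin N, W n 0 = σ0 ^ ((N : ℝ)⁻¹) • (1 : Matrix (Fin d) (Fin d) ℝ)) :
    (∀ (n : Fin N) (t : ℝ), (U * W n t * Uᵀ).IsDiag) ∧
      (∀ (i : Fin d) (t : ℝ),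
        HasDerivAt (fun s => (U * P s * Uᵀ) i i)
          ((U * P t * Uᵀ) i i ^ (2 - 2 / (N : ℝ)) *
            (Dstar i i - (U * P t * Uᵀ) i i)) t) := by
  have hN0 : N ≠ 0 := by omega
  set φ := Unitary.conjStarAlgAut ℝ (Matrix (Fin d) (Fin d) ℝ)
    ⟨U, (mem_orthogonalGroup_iff (Fin d) ℝ).2 hU⟩
  have hφ (A : Matrix (Fin d) (Fin d) ℝ) : φ A = U * A * Uᵀ := by
    simp [φ, star_eq_conjTranspose]
  have hWstar : φ Wstar = diagonal Dstar.diag := by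
    rw [hdiag.diagonal_diag, hdecomp,
      show Uᵀ * Dstar * U = φ.symm Dstar by simp [φ, star_eq_conjTranspose], φ.apply_symm_apply]
  have hW (t : ℝ) : HasDerivAt (fun s n => W n s) (gradFlowField Wstar fun n => W n t) t :=
    hasDerivAt_pi.2 fun n => hasDerivAt_pi.2 fun i => hasDerivAt_pi.2 fun j => by
      simpa only [gradFlowField, endToEnd, ← hP] using hflow n t i j
  have hV0 : (fun n => φ (W n 0)) = fun _ => diagonal fun _ => σ0 ^ (N : ℝ)⁻¹ := by
    funext n
    simp [hinit, ← smul_one_eq_diagonal]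
  obtain ⟨δ, hVδ, hδ0, hδ⟩ := exists_diagonal_of_hasDerivAt_gradFlowField hN0
    (fun t => hWstar ▸ hasDerivAt_map_gradFlowField φ (hW t)) hV0
  have hPδ (t : ℝ) : U * P t * Uᵀ = diagonal (δ t ^ N) := by
    rw [← hφ, hP, ← endToEnd, map_endToEnd, hVδ, endToEnd_const, diagonal_pow]
  refine ⟨fun n t => ?_, fun i t => ?_⟩
  · rw [← hφ, congr_fun (hVδ t) n]
    exact isDiag_diagonal _
  · simp only [hPδ, diagonal_apply_eq, Pi.pow_apply]
    exact hasDerivAt_pow_of_scalar_gradFlow hN (hδ · i) (by rw [hδ0]; positivity) t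

theorem stmt_14 (d N : ℕ) (hN : 1 ≤ N) (σ0 : ℝ) (hσ0 : 0 < σ0)
    (W : Fin N → ℝ → Matrix (Fin d) (Fin d) ℝ)
    (Wstar U Dstar : Matrix (Fin d) (Fin d) ℝ)
    (hU : U * Uᵀ = 1) (hdiag : Dstar.IsDiag)
    (hdecomp : Wstar = Uᵀ * Dstar * U) (hpsd : Wstar.PosSemidef)
    -- the end-to-end product W(t) = W_N(t) ⋯ W_1(t)
    (P : ℝ → Matrix (Fin d) (Fin d) ℝ)
    (hP : ∀ t, P t = (List.ofFn fun n : Fin N => W n t).reverse.prod)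
    -- gradient flow: Ẇₙ = (1/N) · W_{1:n-1}ᵀ (W* - W) W_{n+1:N}ᵀ, entrywise
    (hflow : ∀ (n : Fin N) (t : ℝ) (i j : Fin d),
      HasDerivAt (fun s => W n s i j)
        (((N : ℝ)⁻¹ •
          (((List.ofFn fun k : Fin N => W k t).take (n : ℕ)).reverse.prodᵀ *
            (Wstar - P t) *
            ((List.ofFn fun k : Fin N => W k t).drop ((n : ℕ) + 1)).reverse.prodᵀ)) i j) t)
    -- initialization: Wₙ(0) = σ₀^{1/N} · I
    (hinit : ∀ n : Fin N, W n 0 = σ0 ^ ((N : ℝ)⁻¹) • (1 : Matrix (Fin d) (Fin d) ℝ)) :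
    (∀ (n : Fin N) (t : ℝ), (U * W n t * Uᵀ).IsDiag) ∧
      (∀ (i : Fin d) (t : ℝ),
        HasDerivAt (fun s => (U * P s * Uᵀ) i i)
          ((U * P t * Uᵀ) i i ^ (2 - 2 / (N : ℝ)) *
            (Dstar i i - (U * P t * Uᵀ) i i)) t) :=
  stmt_14_general d N hN σ0 hσ0 W Wstar U Dstar hU hdiag hdecomp P hP hflow hinit
end

section
/- Suppose for each n ∈ {1,...,N} and each index i, the scalar functions σ_{n,i}(t) satisfy σ_{n,i}'(t) = (1/N)(σᵢ* - ∏ₖ σ_{k,i}(t))·∏_{j≠n} σ_{j,i}(t), with equal initialization σ_{n,i}(0) = σ₀^{1/N} > 0 for all n. Then σ_{n,i}(t) = σ_{m,i}(t) for all n, m, t, and the product σᵢ(t) = ∏ₙ σ_{n,i}(t) satisfies σᵢ'(t) = σᵢ(t)^{2-2/N}(σᵢ* - σᵢ(t)). -/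
/-!
Since `x n * x n' = F * ∏ k, x k` does not depend on `n`, the squares `x n ^ 2` all move
together, so equal initial values give `|x n| = |x m|` forever. Then `|x n'| = |F| |x n| ^ (N - 1)`,
which for `N ≥ 2` is `O(|x n|)` on compacts, so by Grönwall no `x n` can reach `0`; starting
positive they stay positive and hence equal. The product is then `w ^ N` for the common value `w`,
and the chain rule gives the toy-model ODE.
-/

open Finset Set

section Gronwall

variable {E : Type*} [NormedAddCommGroup E] [NormedSpace ℝ E] {f f' : ℝ → E} {g : ℝ → ℝ}

theorem eq_zero_of_norm_deriv_le_mul_norm_of_le (hf : ∀ t, HasDerivAt f (f' t) t)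
    (hg : Continuous g) (hbound : ∀ t, ‖f' t‖ ≤ g t * ‖f t‖) {t₀ t : ℝ} (h₀ : f t₀ = 0)
    (hle : t₀ ≤ t) : f t = 0 := by
  obtain ⟨K, hK⟩ := isCompact_Icc.exists_bound_of_continuousOn (hg.continuousOn (s := Icc t₀ t))
  refine eq_zero_of_abs_deriv_le_mul_abs_self_of_eq_zero_right (K := K)
    (fun s _ => (hf s).continuousAt.continuousWithinAt) (fun s _ => (hf s).hasDerivWithinAt) h₀
    (fun s hs => ?_) t ⟨hle, le_rfl⟩
  calc ‖f' s‖ ≤ g s * ‖f s‖ := hbound s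
    _ ≤ K * ‖f s‖ := by
      gcongr
      exact (Real.le_norm_self _).trans (hK s (Ico_subset_Icc_self hs))

theorem eq_zero_of_norm_deriv_le_mul_norm_s15 (hf : ∀ t, HasDerivAt f (f' t) t)
    (hg : Continuous g) (hbound : ∀ t, ‖f' t‖ ≤ g t * ‖f t‖) {t₀ : ℝ} (h₀ : f t₀ = 0)
    (t : ℝ) : f t = 0 := by
  rcases le_total t₀ t with hle | hle
  · exact eq_zero_of_norm_deriv_le_mul_norm_of_le hf hg hbound h₀ hle
  · have hf_neg : ∀ s, HasDerivAt (fun s => f (-s)) (-f' (-s)) s := fun s => by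
      simpa [Function.comp_def] using (hf (-s)).scomp s (hasDerivAt_neg s)
    simpa using eq_zero_of_norm_deriv_le_mul_norm_of_le hf_neg (hg.comp continuous_neg)
      (fun s => by simpa using hbound (-s)) (t₀ := -t₀) (by simpa using h₀) (neg_le_neg hle)

end Gronwall

theorem pos_of_continuous_of_ne_zero {f : ℝ → ℝ} (hf : Continuous f) {t₀ : ℝ} (h₀ : 0 < f t₀)
    (hne : ∀ t, f t ≠ 0) (t : ℝ) : 0 < f t := by
  by_contra! ht
  obtain ⟨s, hs⟩ := intermediate_value_univ t t₀ hf ⟨ht, h₀.le⟩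
  exact hne s hs

theorem pow_rpow_two_sub_two_div {N : ℕ} (hN : N ≠ 0) {w : ℝ} (hw : 0 ≤ w) :
    (w ^ N) ^ (2 - 2 / (N : ℝ)) = (w ^ (N - 1)) ^ 2 := by
  rw [← Real.rpow_natCast w N, ← Real.rpow_mul hw, ← pow_mul, ← Real.rpow_natCast]
  congr 1
  have : (N : ℝ) ≠ 0 := by exact_mod_cast hN
  push_cast [Nat.cast_sub (Nat.one_le_iff_ne_zero.2 hN)]
  field_simp

/-- Each factor moves along `∂(∏ k, x k) / ∂(x n)` scaled by a common `F t`; for a singular value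
of a deep linear network, `F t = (σ* - ∏ k, x k t) / N`. -/
def IsProductFlow {N : ℕ} (F : ℝ → ℝ) (x : Fin N → ℝ → ℝ) : Prop :=
  ∀ n t, HasDerivAt (x n) (F t * ∏ j ∈ univ.erase n, x j t) t

namespace IsProductFlow

variable {N : ℕ} {F : ℝ → ℝ} {x : Fin N → ℝ → ℝ} {c : ℝ}

theorem continuous (h : IsProductFlow F x) (n : Fin N) : Continuous (x n) :=
  continuous_iff_continuousAt.2 fun t => (h n t).continuousAt

theorem sq_sub_sq_eq (h : IsProductFlow F x) (n m : Fin N) (t : ℝ) :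
    x n t ^ 2 - x m t ^ 2 = x n 0 ^ 2 - x m 0 ^ 2 := by
  have hderiv : ∀ s, HasDerivAt (fun r => x n r ^ 2 - x m r ^ 2) 0 s := fun s => by
    refine (((h n s).fun_pow 2).sub ((h m s).fun_pow 2)).congr_deriv ?_
    have hn := mul_prod_erase univ (fun k => x k s) (mem_univ n)
    have hm := mul_prod_erase univ (fun k => x k s) (mem_univ m)
    linear_combination 2 * F s * (hn - hm)
  exact is_const_of_deriv_eq_zero (fun s => (hderiv s).differentiableAt)
    (fun s => (hderiv s).deriv) t 0

theorem abs_eq_abs (h : IsProductFlow F x) (h₀ : ∀ n, x n 0 = c) (n m : Fin N) (t : ℝ) :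
    |x n t| = |x m t| := by
  rw [← sq_eq_sq_iff_abs_eq_abs, ← sub_eq_zero, h.sq_sub_sq_eq, h₀, h₀, sub_self]

theorem abs_prod_erase (h : IsProductFlow F x) (h₀ : ∀ n, x n 0 = c) (n : Fin N) (t : ℝ) :
    |∏ j ∈ univ.erase n, x j t| = |x n t| ^ (N - 1) := by
  rw [abs_prod, prod_congr rfl fun j _ => h.abs_eq_abs h₀ j n t, prod_const,
    card_erase_of_mem (mem_univ n), card_univ, Fintype.card_fin]

theorem ne_zero (h : IsProductFlow F x) (hF : Continuous F) (hN : 2 ≤ N) (h₀ : ∀ n, x n 0 = c)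
    (hc : c ≠ 0) (n : Fin N) (t : ℝ) : x n t ≠ 0 := by
  have hbound : ∀ s, ‖F s * ∏ j ∈ univ.erase n, x j s‖ ≤ (|F s| * |x n s| ^ (N - 2)) * ‖x n s‖ :=
    fun s => by
      rw [Real.norm_eq_abs, Real.norm_eq_abs, abs_mul, h.abs_prod_erase h₀,
        show N - 1 = N - 2 + 1 by omega, pow_succ, mul_assoc]
  intro ht
  exact hc (h₀ n ▸ eq_zero_of_norm_deriv_le_mul_norm_s15 (h n)
    (hF.abs.mul ((h.continuous n).abs.pow _)) hbound ht 0)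

theorem pos (h : IsProductFlow F x) (hF : Continuous F) (hN : 2 ≤ N) (h₀ : ∀ n, x n 0 = c)
    (hc : 0 < c) (n : Fin N) (t : ℝ) : 0 < x n t :=
  pos_of_continuous_of_ne_zero (h.continuous n) (t₀ := 0) (h₀ n ▸ hc)
    (h.ne_zero hF hN h₀ hc.ne' n) t

theorem eq (h : IsProductFlow F x) (hF : Continuous F) (hN : 2 ≤ N) (h₀ : ∀ n, x n 0 = c)
    (hc : 0 < c) (n m : Fin N) (t : ℝ) : x n t = x m t := by
  rw [← abs_of_pos (h.pos hF hN h₀ hc n t), ← abs_of_pos (h.pos hF hN h₀ hc m t),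
    h.abs_eq_abs h₀]

end IsProductFlow

theorem IsProductFlow.eq_and_hasDerivAt_prod {N : ℕ} {x : Fin N → ℝ → ℝ} {s c : ℝ} (hN : 1 ≤ N)
    (h : IsProductFlow (fun t => 1 / (N : ℝ) * (s - ∏ k, x k t)) x) (h₀ : ∀ n, x n 0 = c)
    (hc : 0 < c) :
    (∀ n m t, x n t = x m t) ∧
      ∀ t, HasDerivAt (fun t => ∏ n, x n t)
        ((∏ n, x n t) ^ (2 - 2 / (N : ℝ)) * (s - ∏ n, x n t)) t := by
  set m : Fin N := ⟨0, hN⟩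
  obtain ⟨heq, hrpow⟩ : (∀ n m t, x n t = x m t) ∧
      ∀ t, (x m t ^ N) ^ (2 - 2 / (N : ℝ)) = (x m t ^ (N - 1)) ^ 2 := by
    -- for `N = 1` the factor may change sign, but then the exponent `2 - 2 / N` is `0`
    rcases hN.eq_or_lt with rfl | hN
    · exact ⟨fun n m t => by rw [Subsingleton.elim n m], fun t => by norm_num⟩
    · have hF : Continuous fun t => 1 / (N : ℝ) * (s - ∏ k, x k t) := by
        have := h.continuous
        fun_prop
      exact ⟨h.eq hF hN h₀ hc, fun t =>
        pow_rpow_two_sub_two_div (by omega) (h.pos hF hN h₀ hc m t).le⟩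
  have hprod : ∀ t, ∏ n, x n t = x m t ^ N := fun t => by
    rw [prod_congr rfl fun n _ => heq n m t, prod_const, card_univ, Fintype.card_fin]
  have herase : ∀ t, ∏ j ∈ univ.erase m, x j t = x m t ^ (N - 1) := fun t => by
    rw [prod_congr rfl fun n _ => heq n m t, prod_const, card_erase_of_mem (mem_univ m),
      card_univ, Fintype.card_fin]
  refine ⟨heq, fun t => ?_⟩
  simp only [hprod, hrpow]
  refine ((h m t).fun_pow N).congr_deriv ?_
  have : (N : ℝ) ≠ 0 := by positivity
  beta_reduce
  rw [hprod, herase]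
  field_simp

theorem stmt_15 {ι : Type*} (N : ℕ) (hN : 1 ≤ N) (σ0 : ℝ) (hσ0 : 0 < σ0)
    (σ : ι → Fin N → ℝ → ℝ) (σstar : ι → ℝ)
    (hode : ∀ (i : ι) (n : Fin N) (t : ℝ),
      HasDerivAt (σ i n)
        ((1 / (N : ℝ)) * (σstar i - ∏ k : Fin N, σ i k t) *
          ∏ j ∈ Finset.univ.erase n, σ i j t) t)
    (hinit : ∀ (i : ι) (n : Fin N), σ i n 0 = σ0 ^ ((N : ℝ)⁻¹)) :
    (∀ (i : ι) (n m : Fin N) (t : ℝ), σ i n t = σ i m t) ∧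
      (∀ (i : ι) (t : ℝ),
        HasDerivAt (fun s => ∏ n : Fin N, σ i n s)
          ((∏ n : Fin N, σ i n t) ^ (2 - 2 / (N : ℝ)) *
            (σstar i - ∏ n : Fin N, σ i n t)) t) := by
  have hc : 0 < σ0 ^ ((N : ℝ)⁻¹) := Real.rpow_pos_of_pos hσ0 _
  have hσ := fun i => IsProductFlow.eq_and_hasDerivAt_prod hN (hode i) (hinit i) hc
  exact ⟨fun i => (hσ i).1, fun i => (hσ i).2⟩
end

section
/- Let σᵢ and σⱼ solve σ' = σ^{2-2/N}(σ* - σ) with targets σᵢ* > σⱼ* > 0 and common initial value σ₀ ∈ (0, σⱼ*). Then for all t > 0, σᵢ(t) > σⱼ(t). -/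
/-!
Both solutions start at `σ₀`, and wherever they meet at a positive value `s` the difference
`σᵢ - σⱼ` has derivative `s ^ p (σᵢ* - σⱼ*) > 0`, so it can only cross zero upwards and stays
positive after time `0`. Positivity of `σⱼ` itself comes from the lower barrier
`σ₀ e^{-C t}`, with `C` exceeding `σⱼ ^ p` on the time interval considered.
-/

open Set Filter Topology

theorem pos_of_hasDerivAt_pos_at_zeros {g g' : ℝ → ℝ} (hg : ∀ x, HasDerivAt g (g' x) x)
    (h0 : g 0 = 0) (hzero : ∀ x, 0 ≤ x → g x = 0 → 0 < g' x) {t : ℝ} (ht : 0 < t) :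
    0 < g t := by
  have hcont : ContinuousOn g (Icc 0 t) := fun x _ => (hg x).continuousAt.continuousWithinAt
  have hnonneg : ∀ x ∈ Icc 0 t, 0 ≤ g x :=
    image_le_of_deriv_right_lt_deriv_boundary' (f' := fun _ => 0) continuousOn_const
      (fun _ _ => hasDerivWithinAt_const _ _ _) h0.ge hcont
      (fun x _ => (hg x).hasDerivWithinAt) (fun x hx hgx => hzero x hx.1 hgx.symm)
  refine (hnonneg t ⟨ht.le, le_rfl⟩).lt_of_ne' fun hgt => ?_
  have hslope : ∀ᶠ x in 𝓝[<] t, 0 < slope g t x :=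
    ((hasDerivAt_iff_tendsto_slope.mp (hg t)).eventually
      (eventually_gt_nhds (hzero t ht.le hgt))).filter_mono (nhdsLT_le_nhdsNE t)
  obtain ⟨x, hx, hxt⟩ := (hslope.and (Ioo_mem_nhdsLT ht)).exists
  exact (neg_of_slope_pos hxt.2 hx hgt).not_ge (hnonneg x ⟨hxt.1.le, hxt.2.le⟩)

theorem pos_of_hasDerivAt_rpow_mul_sub {p a : ℝ} (hp : 0 ≤ p) (ha : 0 ≤ a) {σ : ℝ → ℝ}
    (hσ : ∀ t, HasDerivAt σ (σ t ^ p * (a - σ t)) t) (h0 : 0 < σ 0) {T : ℝ} (hT : 0 ≤ T) :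
    0 < σ T := by
  have hcont : ContinuousOn σ (Icc 0 T) := fun x _ => (hσ x).continuousAt.continuousWithinAt
  obtain ⟨M, hM⟩ := isCompact_Icc.bddAbove_image hcont
  set C := M ^ p + 1
  have hbarrier : ∀ x, HasDerivAt (fun t => σ 0 * Real.exp (-C * t))
      (-C * (σ 0 * Real.exp (-C * x))) x := fun x => by
    have h := ((hasDerivAt_id x).const_mul (-C)).exp.const_mul (σ 0)
    simp only [id, mul_one] at h
    exact h.congr_deriv (by ring)
  have hle : σ 0 * Real.exp (-C * T) ≤ σ T := by
    refine image_le_of_deriv_right_lt_deriv_boundary'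
      (fun x _ => (hbarrier x).continuousAt.continuousWithinAt)
      (fun x _ => (hbarrier x).hasDerivWithinAt) (by simp) hcont
      (fun x _ => (hσ x).hasDerivWithinAt) (fun x hx hcontact => ?_) ⟨hT, le_rfl⟩
    have hσx : 0 < σ x := hcontact ▸ by positivity
    have hσM : σ x ^ p ≤ M ^ p :=
      Real.rpow_le_rpow hσx.le (hM ⟨x, Ico_subset_Icc_self hx, rfl⟩) hp
    have hσp : 0 ≤ σ x ^ p := Real.rpow_nonneg hσx.le p
    rw [hcontact]
    nlinarith
  exact (by positivity : 0 < σ 0 * Real.exp (-C * T)).trans_le hle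

theorem stmt_19_general (N : ℕ) (hN : 1 ≤ N) (σis σjs σ0 : ℝ)
    (hσjs : 0 < σjs) (hlt : σjs < σis)
    (hσ0 : 0 < σ0)
    (σi σj : ℝ → ℝ)
    (hodei : ∀ t : ℝ, HasDerivAt σi (σi t ^ (2 - 2 / (N : ℝ)) * (σis - σi t)) t)
    (hodej : ∀ t : ℝ, HasDerivAt σj (σj t ^ (2 - 2 / (N : ℝ)) * (σjs - σj t)) t)
    (hiniti : σi 0 = σ0) (hinitj : σj 0 = σ0) :
    ∀ t : ℝ, 0 < t → σj t < σi t := by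
  intro t ht
  have hp : 0 ≤ 2 - 2 / (N : ℝ) := by
    have hN' : (1 : ℝ) ≤ N := by exact_mod_cast hN
    rw [sub_nonneg, div_le_iff₀ (by positivity)]
    linarith
  refine sub_pos.mp (pos_of_hasDerivAt_pos_at_zeros (fun x => (hodei x).sub (hodej x))
    (by rw [Pi.sub_apply, hiniti, hinitj, sub_self]) (fun x hx hmeet => ?_) ht)
  rw [sub_eq_zero.mp hmeet, ← mul_sub, sub_sub_sub_cancel_right]
  exact mul_pos (Real.rpow_pos_of_pos
    (pos_of_hasDerivAt_rpow_mul_sub hp hσjs.le hodej (hinitj ▸ hσ0) hx) _) (sub_pos.mpr hlt)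

theorem stmt_19 (N : ℕ) (hN : 1 ≤ N) (σis σjs σ0 : ℝ)
    (hσjs : 0 < σjs) (hlt : σjs < σis)
    (hσ0 : 0 < σ0) (hσ0j : σ0 < σjs)
    (σi σj : ℝ → ℝ)
    (hodei : ∀ t : ℝ, HasDerivAt σi (σi t ^ (2 - 2 / (N : ℝ)) * (σis - σi t)) t)
    (hodej : ∀ t : ℝ, HasDerivAt σj (σj t ^ (2 - 2 / (N : ℝ)) * (σjs - σj t)) t)
    (hiniti : σi 0 = σ0) (hinitj : σj 0 = σ0) :
    ∀ t : ℝ, 0 < t → σj t < σi t :=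
  stmt_19_general N hN σis σjs σ0 hσjs hlt hσ0 σi σj hodei hodej hiniti hinitj
end
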